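/- (Approximate isomorphism of natural latents) If Λ and Λ' each satisfy mediation over (X₁, X₂) to within ε_med (in KL) and redundancy to within ε_red (H(latent|Xⱼ) ≤ ε_red for j = 1,2), then H(Λ'|Λ) ≤ ε_med + 2ε_red and H(Λ|Λ') ≤ ε_med + 2ε_red. -/
import Mathlib


open scoped Classical BigOperators

noncomputable section

/-- Probability of an event under a mass function `p` on a finite sample space. -/
def prob {Ω : Type*} [Fintype Ω] (p : Ω → ℝ) (E : Ω → Prop) : ℝ :=
  ∑ ω, if E ω then p ω else 0

/-- KL divergence between two mass functions on a finite type. -/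
def KL {γ : Type*} [Fintype γ] (P Q : γ → ℝ) : ℝ :=
  ∑ z, P z * Real.log (P z / Q z)

/-- Conditional Shannon entropy H(Y|X). -/
def condEnt {Ω α β : Type*} [Fintype Ω] [Fintype α] [Fintype β]
    (p : Ω → ℝ) (X : Ω → α) (Y : Ω → β) : ℝ :=
  -∑ x, ∑ y, prob p (fun ω => X ω = x ∧ Y ω = y) *
      Real.log (prob p (fun ω => X ω = x ∧ Y ω = y) / prob p (fun ω => X ω = x))

/-- Mediation error: D_KL(P[X₁,X₂,Λ] ‖ P[Λ]·P[X₁|Λ]·P[X₂|Λ]). -/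
def medKL {Ω α β γ : Type*} [Fintype Ω] [Fintype α] [Fintype β] [Fintype γ]
    (p : Ω → ℝ) (X1 : Ω → α) (X2 : Ω → β) (L : Ω → γ) : ℝ :=
  KL
    (fun t : α × β × γ => prob p (fun ω => X1 ω = t.1 ∧ X2 ω = t.2.1 ∧ L ω = t.2.2))
    (fun t : α × β × γ =>
      prob p (fun ω => L ω = t.2.2) *
        (prob p (fun ω => X1 ω = t.1 ∧ L ω = t.2.2) / prob p (fun ω => L ω = t.2.2)) *
        (prob p (fun ω => X2 ω = t.2.1 ∧ L ω = t.2.2) / prob p (fun ω => L ω = t.2.2)))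

set_option linter.unusedSectionVars false
set_option linter.unusedVariables false

section Helpers

variable {Ω : Type*} [Fintype Ω] (p : Ω → ℝ)

lemma prob_congr {E F : Ω → Prop} (h : ∀ ω, E ω ↔ F ω) : prob p E = prob p F := by
  unfold prob
  exact Finset.sum_congr rfl fun ω _ => by simp only [h ω]

lemma prob_nonneg (hp : ∀ ω, 0 ≤ p ω) (E : Ω → Prop) : 0 ≤ prob p E :=
  Finset.sum_nonneg fun ω _ => by by_cases hE : E ω <;> simp [hE, hp ω]

lemma prob_mono (hp : ∀ ω, 0 ≤ p ω) {E F : Ω → Prop} (h : ∀ ω, E ω → F ω) :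
    prob p E ≤ prob p F :=
  Finset.sum_le_sum fun ω _ => by
    by_cases hE : E ω
    · simp [hE, h ω hE]
    · by_cases hF : F ω <;> simp [hE, hF, hp ω]

lemma prob_fiber_sum {β : Type*} [Fintype β] (E : Ω → Prop) (Y : Ω → β) :
    ∑ y, prob p (fun ω => E ω ∧ Y ω = y) = prob p E := by
  unfold prob
  rw [Finset.sum_comm]
  refine Finset.sum_congr rfl fun ω _ => ?_
  by_cases hE : E ω
  · simp [hE, Finset.sum_ite_eq]
  · simp [hE]

lemma gibbs {ι : Type*} [Fintype ι] (a b : ι → ℝ) (ha : ∀ i, 0 ≤ a i)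
    (hb : ∀ i, 0 ≤ b i) (hab : ∀ i, b i = 0 → a i = 0)
    (hs : ∑ i, b i ≤ ∑ i, a i) :
    0 ≤ ∑ i, a i * Real.log (a i / b i) := by
  have key : ∀ i, a i - b i ≤ a i * Real.log (a i / b i) := by
    intro i
    rcases (ha i).eq_or_lt with h0 | hpos
    · rw [← h0]; simpa using hb i
    · have hbne : b i ≠ 0 := fun h => absurd (hab i h) hpos.ne'
      have hbpos : 0 < b i := (hb i).lt_of_ne' hbne
      have hlog : 1 - b i / a i ≤ Real.log (a i / b i) := by
        have h1 := Real.log_le_sub_one_of_pos (div_pos hbpos hpos)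
        have h2 : Real.log (b i / a i) = - Real.log (a i / b i) := by
          rw [← Real.log_inv]
          congr 1
          field_simp
        linarith
      have h3 := mul_le_mul_of_nonneg_left hlog hpos.le
      have h4 : a i * (1 - b i / a i) = a i - b i := by field_simp
      linarith
  have h5 : ∑ i, (a i - b i) ≤ ∑ i, a i * Real.log (a i / b i) :=
    Finset.sum_le_sum fun i _ => key i
  rw [Finset.sum_sub_distrib] at h5
  linarith

end Helpers
section Reindex

variable {Ω α β γ : Type*} [Fintype Ω] [Fintype α] [Fintype β] [Fintype γ]
variable (p : Ω → ℝ)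

lemma condEnt_cond_congr {α' : Type*} [Fintype α'] (e : α ≃ α')
    (X : Ω → α) (X' : Ω → α') (h : ∀ ω, X' ω = e (X ω)) (Z : Ω → γ) :
    condEnt p X' Z = condEnt p X Z := by
  have hx : ∀ x, prob p (fun ω => X' ω = e x) = prob p (fun ω => X ω = x) := fun x =>
    prob_congr p fun ω => by rw [h ω]; exact e.apply_eq_iff_eq
  have hxz : ∀ (x : α) (z : γ), prob p (fun ω => X' ω = e x ∧ Z ω = z)
      = prob p (fun ω => X ω = x ∧ Z ω = z) := fun x z =>
    prob_congr p fun ω => by rw [h ω]; exact and_congr_left' e.apply_eq_iff_eq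
  unfold condEnt
  congr 1
  refine (Fintype.sum_equiv e _ _ fun x => ?_).symm
  refine Finset.sum_congr rfl fun z _ => ?_
  rw [hxz x z, hx x]

lemma condEnt_right_congr {β' : Type*} [Fintype β'] (e : β ≃ β')
    (X : Ω → α) (Y : Ω → β) (Y' : Ω → β') (h : ∀ ω, Y' ω = e (Y ω)) :
    condEnt p X Y' = condEnt p X Y := by
  unfold condEnt
  congr 1
  refine Finset.sum_congr rfl fun x _ => ?_
  refine (Fintype.sum_equiv e _ _ fun y => ?_).symm
  have h1 : prob p (fun ω => X ω = x ∧ Y' ω = e y) = prob p (fun ω => X ω = x ∧ Y ω = y) :=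
    prob_congr p fun ω => by rw [h ω]; exact and_congr_right' e.apply_eq_iff_eq
  rw [h1]

lemma condEnt_nonneg (hp : ∀ ω, 0 ≤ p ω) (X : Ω → α) (Y : Ω → β) :
    0 ≤ condEnt p X Y := by
  unfold condEnt
  rw [neg_nonneg]
  refine Finset.sum_nonpos fun x _ => Finset.sum_nonpos fun y _ => ?_
  have ha : 0 ≤ prob p (fun ω => X ω = x ∧ Y ω = y) := prob_nonneg p hp _
  have hac : prob p (fun ω => X ω = x ∧ Y ω = y) ≤ prob p (fun ω => X ω = x) :=
    prob_mono p hp fun ω hw => hw.1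
  rcases ha.eq_or_lt with h0 | hpos
  · rw [← h0]; simp
  · have hc : 0 < prob p (fun ω => X ω = x) := lt_of_lt_of_le hpos hac
    apply mul_nonpos_of_nonneg_of_nonpos ha ?_
    · exact Real.log_nonpos (div_nonneg ha (prob_nonneg p hp _)) ((div_le_one hc).mpr hac)

end Reindex
section Reps

variable {Ω α β γ : Type*} [Fintype Ω] [Fintype α] [Fintype β] [Fintype γ]
variable (p : Ω → ℝ)

/-- Marginalization of a triple joint over the last coordinate. -/
lemma prob_marg3 (X : Ω → α) (Y : Ω → β) (Z : Ω → γ) (x : α) (y : β) :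
    prob p (fun ω => X ω = x ∧ Y ω = y) =
      ∑ z, prob p (fun ω => X ω = x ∧ Y ω = y ∧ Z ω = z) := by
  rw [← prob_fiber_sum p (fun ω => X ω = x ∧ Y ω = y) Z]
  exact Finset.sum_congr rfl fun z _ => prob_congr p fun ω => by tauto

lemma prob_marg3_mid (X : Ω → α) (Y : Ω → β) (Z : Ω → γ) (x : α) (z : γ) :
    prob p (fun ω => X ω = x ∧ Z ω = z) =
      ∑ y, prob p (fun ω => X ω = x ∧ Y ω = y ∧ Z ω = z) := by
  rw [← prob_fiber_sum p (fun ω => X ω = x ∧ Z ω = z) Y]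
  exact Finset.sum_congr rfl fun y _ => prob_congr p fun ω => by tauto

/-- H((Y,Z)|X) as a triple sum. -/
lemma condEnt_rep_pair_right (X : Ω → α) (Y : Ω → β) (Z : Ω → γ) :
    condEnt p X (fun ω => (Y ω, Z ω)) =
      -∑ x, ∑ y, ∑ z,
        prob p (fun ω => X ω = x ∧ Y ω = y ∧ Z ω = z) *
          Real.log (prob p (fun ω => X ω = x ∧ Y ω = y ∧ Z ω = z) /
            prob p (fun ω => X ω = x)) := by
  unfold condEnt
  congr 1
  refine Finset.sum_congr rfl fun x _ => ?_
  rw [Fintype.sum_prod_type]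
  refine Finset.sum_congr rfl fun y _ => Finset.sum_congr rfl fun z _ => ?_
  have h : prob p (fun ω => X ω = x ∧ (Y ω, Z ω) = (y, z)) =
      prob p (fun ω => X ω = x ∧ Y ω = y ∧ Z ω = z) :=
    prob_congr p fun ω => by simp [Prod.ext_iff, and_assoc]
  rw [h]

/-- H(Z|(X,Y)) as a triple sum. -/
lemma condEnt_rep_pair_left (X : Ω → α) (Y : Ω → β) (Z : Ω → γ) :
    condEnt p (fun ω => (X ω, Y ω)) Z =
      -∑ x, ∑ y, ∑ z,
        prob p (fun ω => X ω = x ∧ Y ω = y ∧ Z ω = z) *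
          Real.log (prob p (fun ω => X ω = x ∧ Y ω = y ∧ Z ω = z) /
            prob p (fun ω => X ω = x ∧ Y ω = y)) := by
  unfold condEnt
  congr 1
  rw [Fintype.sum_prod_type]
  refine Finset.sum_congr rfl fun x _ => Finset.sum_congr rfl fun y _ =>
    Finset.sum_congr rfl fun z _ => ?_
  have h1 : prob p (fun ω => (X ω, Y ω) = (x, y) ∧ Z ω = z) =
      prob p (fun ω => X ω = x ∧ Y ω = y ∧ Z ω = z) :=
    prob_congr p fun ω => by simp [Prod.ext_iff, and_assoc]
  have h2 : prob p (fun ω => (X ω, Y ω) = (x, y)) =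
      prob p (fun ω => X ω = x ∧ Y ω = y) :=
    prob_congr p fun ω => by simp [Prod.ext_iff]
  rw [h1, h2]

/-- H(Y|X) as a triple sum, fattened over a dummy last variable Z. -/
lemma condEnt_rep_fat (X : Ω → α) (Y : Ω → β) (Z : Ω → γ) :
    condEnt p X Y =
      -∑ x, ∑ y, ∑ z,
        prob p (fun ω => X ω = x ∧ Y ω = y ∧ Z ω = z) *
          Real.log (prob p (fun ω => X ω = x ∧ Y ω = y) /
            prob p (fun ω => X ω = x)) := by
  unfold condEnt
  congr 1
  refine Finset.sum_congr rfl fun x _ => Finset.sum_congr rfl fun y _ => ?_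
  rw [← Finset.sum_mul, ← prob_marg3 p X Y Z x y]

/-- H(Z|X) as a triple sum, fattened over a dummy middle variable Y. -/
lemma condEnt_rep_fat_mid (X : Ω → α) (Y : Ω → β) (Z : Ω → γ) :
    condEnt p X Z =
      -∑ x, ∑ y, ∑ z,
        prob p (fun ω => X ω = x ∧ Y ω = y ∧ Z ω = z) *
          Real.log (prob p (fun ω => X ω = x ∧ Z ω = z) /
            prob p (fun ω => X ω = x)) := by
  unfold condEnt
  congr 1
  refine Finset.sum_congr rfl fun x _ => ?_
  rw [Finset.sum_comm]
  refine Finset.sum_congr rfl fun z _ => ?_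
  rw [← Finset.sum_mul, ← prob_marg3_mid p X Y Z x z]

end Reps
section Chain

variable {Ω α β γ : Type*} [Fintype Ω] [Fintype α] [Fintype β] [Fintype γ]
variable (p : Ω → ℝ)

lemma log_term_split {a b c : ℝ} (ha : 0 ≤ a) (hab : a ≤ b) (hbc : b ≤ c) :
    a * Real.log (a / c) = a * Real.log (b / c) + a * Real.log (a / b) := by
  rcases ha.eq_or_lt with h0 | hpos
  · rw [← h0]; ring
  · have hb : 0 < b := lt_of_lt_of_le hpos hab
    have hc : 0 < c := lt_of_lt_of_le hb hbc
    rw [Real.log_div hpos.ne' hc.ne', Real.log_div hb.ne' hc.ne',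
      Real.log_div hpos.ne' hb.ne']
    ring

/-- Chain rule: H((Y,Z)|X) = H(Y|X) + H(Z|(X,Y)). -/
lemma condEnt_chain (hp : ∀ ω, 0 ≤ p ω) (X : Ω → α) (Y : Ω → β) (Z : Ω → γ) :
    condEnt p X (fun ω => (Y ω, Z ω)) =
      condEnt p X Y + condEnt p (fun ω => (X ω, Y ω)) Z := by
  rw [condEnt_rep_pair_right p X Y Z, condEnt_rep_fat p X Y Z,
    condEnt_rep_pair_left p X Y Z, ← neg_add, neg_inj, ← Finset.sum_add_distrib]
  refine Finset.sum_congr rfl fun x _ => ?_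
  rw [← Finset.sum_add_distrib]
  refine Finset.sum_congr rfl fun y _ => ?_
  rw [← Finset.sum_add_distrib]
  refine Finset.sum_congr rfl fun z _ => ?_
  exact log_term_split (prob_nonneg p hp _)
    (prob_mono p hp fun ω hw => ⟨hw.1, hw.2.1⟩)
    (prob_mono p hp fun ω hw => hw.1)

/-- Conditioning on more reduces entropy: H(Z|(X,W)) ≤ H(Z|X). -/
lemma condEnt_pair_le (hp : ∀ ω, 0 ≤ p ω) (X : Ω → α) (W : Ω → β) (Z : Ω → γ) :
    condEnt p (fun ω => (X ω, W ω)) Z ≤ condEnt p X Z := by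
  have hgibbs : 0 ≤ ∑ t : α × β × γ,
      prob p (fun ω => X ω = t.1 ∧ W ω = t.2.1 ∧ Z ω = t.2.2) *
        Real.log (prob p (fun ω => X ω = t.1 ∧ W ω = t.2.1 ∧ Z ω = t.2.2) /
          (prob p (fun ω => X ω = t.1 ∧ W ω = t.2.1) *
            prob p (fun ω => X ω = t.1 ∧ Z ω = t.2.2) /
            prob p (fun ω => X ω = t.1))) := by
    refine gibbs _ _ (fun t => prob_nonneg p hp _)
      (fun t => div_nonneg (mul_nonneg (prob_nonneg p hp _) (prob_nonneg p hp _))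
        (prob_nonneg p hp _)) ?_ ?_
    · intro t hbt
      by_contra hat
      have hapos : 0 < prob p (fun ω => X ω = t.1 ∧ W ω = t.2.1 ∧ Z ω = t.2.2) :=
        (prob_nonneg p hp _).lt_of_ne' hat
      have h1 : 0 < prob p (fun ω => X ω = t.1 ∧ W ω = t.2.1) :=
        lt_of_lt_of_le hapos (prob_mono p hp fun ω hw => ⟨hw.1, hw.2.1⟩)
      have h2 : 0 < prob p (fun ω => X ω = t.1 ∧ Z ω = t.2.2) :=
        lt_of_lt_of_le hapos (prob_mono p hp fun ω hw => ⟨hw.1, hw.2.2⟩)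
      have h3 : 0 < prob p (fun ω => X ω = t.1) :=
        lt_of_lt_of_le hapos (prob_mono p hp fun ω hw => hw.1)
      exact absurd hbt (div_pos (mul_pos h1 h2) h3).ne'
    · -- sum of b ≤ sum of a
      have hsa : ∑ t : α × β × γ,
          prob p (fun ω => X ω = t.1 ∧ W ω = t.2.1 ∧ Z ω = t.2.2) =
          ∑ x, prob p (fun ω => X ω = x) := by
        rw [Fintype.sum_prod_type]
        refine Finset.sum_congr rfl fun x _ => ?_
        rw [Fintype.sum_prod_type]
        rw [Finset.sum_congr rfl fun w (_ : w ∈ Finset.univ) =>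
          (prob_marg3 p X W Z x w).symm]
        rw [← prob_fiber_sum p (fun ω => X ω = x) W]
      rw [hsa]
      rw [Fintype.sum_prod_type]
      refine Finset.sum_le_sum fun x _ => ?_
      rw [Fintype.sum_prod_type]
      have hstep : ∀ w : β, (∑ z : γ,
          prob p (fun ω => X ω = x ∧ W ω = w) *
            prob p (fun ω => X ω = x ∧ Z ω = z) / prob p (fun ω => X ω = x)) =
          prob p (fun ω => X ω = x ∧ W ω = w) * prob p (fun ω => X ω = x) /
            prob p (fun ω => X ω = x) := by
        intro w
        rw [← Finset.sum_div, ← Finset.mul_sum, prob_fiber_sum p (fun ω => X ω = x) Z]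
      rw [Finset.sum_congr rfl fun w (_ : w ∈ Finset.univ) => hstep w,
        ← Finset.sum_div, ← Finset.sum_mul, prob_fiber_sum p (fun ω => X ω = x) W]
      rcases (prob_nonneg p hp (fun ω => X ω = x)).eq_or_lt with h0 | hpos
      · rw [← h0]; simp
      · rw [mul_div_assoc, div_self hpos.ne', mul_one]
  have hkey : (∑ t : α × β × γ,
      prob p (fun ω => X ω = t.1 ∧ W ω = t.2.1 ∧ Z ω = t.2.2) *
        Real.log (prob p (fun ω => X ω = t.1 ∧ W ω = t.2.1 ∧ Z ω = t.2.2) /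
          (prob p (fun ω => X ω = t.1 ∧ W ω = t.2.1) *
            prob p (fun ω => X ω = t.1 ∧ Z ω = t.2.2) /
            prob p (fun ω => X ω = t.1)))) =
      condEnt p X Z - condEnt p (fun ω => (X ω, W ω)) Z := by
    rw [condEnt_rep_fat_mid p X W Z, condEnt_rep_pair_left p X W Z, neg_sub_neg]
    rw [Fintype.sum_prod_type, ← Finset.sum_sub_distrib]
    refine Finset.sum_congr rfl fun x _ => ?_
    rw [Fintype.sum_prod_type, ← Finset.sum_sub_distrib]
    refine Finset.sum_congr rfl fun w _ => ?_
    rw [← Finset.sum_sub_distrib]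
    refine Finset.sum_congr rfl fun z _ => ?_
    rcases (prob_nonneg p hp
        (fun ω => X ω = x ∧ W ω = w ∧ Z ω = z)).eq_or_lt with h0 | hpos
    · rw [← h0]; ring
    · have h1 : 0 < prob p (fun ω => X ω = x ∧ W ω = w) :=
        lt_of_lt_of_le hpos (prob_mono p hp fun ω hw' => ⟨hw'.1, hw'.2.1⟩)
      have h2 : 0 < prob p (fun ω => X ω = x ∧ Z ω = z) :=
        lt_of_lt_of_le hpos (prob_mono p hp fun ω hw' => ⟨hw'.1, hw'.2.2⟩)
      have h3 : 0 < prob p (fun ω => X ω = x) :=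
        lt_of_lt_of_le hpos (prob_mono p hp fun ω hw' => hw'.1)
      have hbpos : (0:ℝ) < prob p (fun ω => X ω = x ∧ W ω = w) *
          prob p (fun ω => X ω = x ∧ Z ω = z) / prob p (fun ω => X ω = x) :=
        div_pos (mul_pos h1 h2) h3
      rw [Real.log_div hpos.ne' hbpos.ne', Real.log_div hpos.ne' h1.ne',
        Real.log_div h2.ne' h3.ne',
        Real.log_div (mul_pos h1 h2).ne' h3.ne', Real.log_mul h1.ne' h2.ne']
      ring
  linarith [hgibbs, hkey]

end Chain
section Med

variable {Ω α β γ : Type*} [Fintype Ω] [Fintype α] [Fintype β] [Fintype γ]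
variable (p : Ω → ℝ)

lemma prob_marg3_first (X : Ω → α) (Y : Ω → β) (Z : Ω → γ) (y : β) (z : γ) :
    prob p (fun ω => Y ω = y ∧ Z ω = z) =
      ∑ x, prob p (fun ω => X ω = x ∧ Y ω = y ∧ Z ω = z) := by
  rw [← prob_fiber_sum p (fun ω => Y ω = y ∧ Z ω = z) X]
  exact Finset.sum_congr rfl fun x _ => prob_congr p fun ω => by tauto

/-- H(X1|L) as a triple sum in order (x1, x2, l). -/
lemma condEnt_rep_last1 (X1 : Ω → α) (X2 : Ω → β) (L : Ω → γ) :
    condEnt p L X1 =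
      -∑ x1, ∑ x2, ∑ l,
        prob p (fun ω => X1 ω = x1 ∧ X2 ω = x2 ∧ L ω = l) *
          Real.log (prob p (fun ω => X1 ω = x1 ∧ L ω = l) /
            prob p (fun ω => L ω = l)) := by
  unfold condEnt
  rw [neg_inj]
  have hterm : ∀ (l : γ) (x1 : α),
      prob p (fun ω => L ω = l ∧ X1 ω = x1) *
        Real.log (prob p (fun ω => L ω = l ∧ X1 ω = x1) / prob p (fun ω => L ω = l)) =
      ∑ x2, prob p (fun ω => X1 ω = x1 ∧ X2 ω = x2 ∧ L ω = l) *
        Real.log (prob p (fun ω => X1 ω = x1 ∧ L ω = l) /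
          prob p (fun ω => L ω = l)) := by
    intro l x1
    have he : prob p (fun ω => L ω = l ∧ X1 ω = x1) =
        prob p (fun ω => X1 ω = x1 ∧ L ω = l) := prob_congr p fun ω => and_comm
    rw [he, ← Finset.sum_mul, ← prob_marg3_mid p X1 X2 L x1 l]
  rw [Finset.sum_congr rfl fun l (_ : l ∈ Finset.univ) =>
    Finset.sum_congr rfl fun x1 (_ : x1 ∈ Finset.univ) => hterm l x1]
  rw [Finset.sum_comm]
  exact Finset.sum_congr rfl fun x1 _ => Finset.sum_comm

/-- H(X2|L) as a triple sum in order (x1, x2, l). -/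
lemma condEnt_rep_last2 (X1 : Ω → α) (X2 : Ω → β) (L : Ω → γ) :
    condEnt p L X2 =
      -∑ x1, ∑ x2, ∑ l,
        prob p (fun ω => X1 ω = x1 ∧ X2 ω = x2 ∧ L ω = l) *
          Real.log (prob p (fun ω => X2 ω = x2 ∧ L ω = l) /
            prob p (fun ω => L ω = l)) := by
  unfold condEnt
  rw [neg_inj]
  have hterm : ∀ (l : γ) (x2 : β),
      prob p (fun ω => L ω = l ∧ X2 ω = x2) *
        Real.log (prob p (fun ω => L ω = l ∧ X2 ω = x2) / prob p (fun ω => L ω = l)) =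
      ∑ x1, prob p (fun ω => X1 ω = x1 ∧ X2 ω = x2 ∧ L ω = l) *
        Real.log (prob p (fun ω => X2 ω = x2 ∧ L ω = l) /
          prob p (fun ω => L ω = l)) := by
    intro l x2
    have he : prob p (fun ω => L ω = l ∧ X2 ω = x2) =
        prob p (fun ω => X2 ω = x2 ∧ L ω = l) := prob_congr p fun ω => and_comm
    rw [he, ← Finset.sum_mul, ← prob_marg3_first p X1 X2 L x2 l]
  rw [Finset.sum_congr rfl fun l (_ : l ∈ Finset.univ) =>
    Finset.sum_congr rfl fun x2 (_ : x2 ∈ Finset.univ) => hterm l x2]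
  rw [Finset.sum_congr rfl fun l (_ : l ∈ Finset.univ) => Finset.sum_comm]
  rw [Finset.sum_comm]
  exact Finset.sum_congr rfl fun x1 _ => Finset.sum_comm

/-- H((X1,X2)|L) as a triple sum in order (x1, x2, l). -/
lemma condEnt_rep_last_pair (X1 : Ω → α) (X2 : Ω → β) (L : Ω → γ) :
    condEnt p L (fun ω => (X1 ω, X2 ω)) =
      -∑ x1, ∑ x2, ∑ l,
        prob p (fun ω => X1 ω = x1 ∧ X2 ω = x2 ∧ L ω = l) *
          Real.log (prob p (fun ω => X1 ω = x1 ∧ X2 ω = x2 ∧ L ω = l) /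
            prob p (fun ω => L ω = l)) := by
  unfold condEnt
  rw [neg_inj]
  have hterm : ∀ (l : γ) (x1 : α) (x2 : β),
      prob p (fun ω => L ω = l ∧ (X1 ω, X2 ω) = (x1, x2)) *
        Real.log (prob p (fun ω => L ω = l ∧ (X1 ω, X2 ω) = (x1, x2)) /
          prob p (fun ω => L ω = l)) =
      prob p (fun ω => X1 ω = x1 ∧ X2 ω = x2 ∧ L ω = l) *
        Real.log (prob p (fun ω => X1 ω = x1 ∧ X2 ω = x2 ∧ L ω = l) /
          prob p (fun ω => L ω = l)) := by
    intro l x1 x2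
    have he : prob p (fun ω => L ω = l ∧ (X1 ω, X2 ω) = (x1, x2)) =
        prob p (fun ω => X1 ω = x1 ∧ X2 ω = x2 ∧ L ω = l) :=
      prob_congr p fun ω => by simp [Prod.ext_iff]; tauto
    rw [he]
  simp only [Fintype.sum_prod_type]
  rw [Finset.sum_congr rfl fun l (_ : l ∈ Finset.univ) =>
    Finset.sum_congr rfl fun x1 (_ : x1 ∈ Finset.univ) =>
      Finset.sum_congr rfl fun x2 (_ : x2 ∈ Finset.univ) => hterm l x1 x2]
  rw [Finset.sum_comm]
  exact Finset.sum_congr rfl fun x1 _ => Finset.sum_comm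

/-- medKL as a triple sum. -/
lemma medKL_rep (X1 : Ω → α) (X2 : Ω → β) (L : Ω → γ) :
    medKL p X1 X2 L =
      ∑ x1, ∑ x2, ∑ l,
        prob p (fun ω => X1 ω = x1 ∧ X2 ω = x2 ∧ L ω = l) *
          Real.log (prob p (fun ω => X1 ω = x1 ∧ X2 ω = x2 ∧ L ω = l) /
            (prob p (fun ω => L ω = l) *
              (prob p (fun ω => X1 ω = x1 ∧ L ω = l) / prob p (fun ω => L ω = l)) *
              (prob p (fun ω => X2 ω = x2 ∧ L ω = l) / prob p (fun ω => L ω = l)))) := by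
  unfold medKL KL
  simp only [Fintype.sum_prod_type]

/-- medKL equals the conditional mutual information I(X1;X2|L). -/
lemma medKL_eq (hp : ∀ ω, 0 ≤ p ω) (X1 : Ω → α) (X2 : Ω → β) (L : Ω → γ) :
    medKL p X1 X2 L =
      condEnt p L X1 + condEnt p L X2 - condEnt p L (fun ω => (X1 ω, X2 ω)) := by
  have hpt : ∀ (x1 : α) (x2 : β) (l : γ),
      prob p (fun ω => X1 ω = x1 ∧ X2 ω = x2 ∧ L ω = l) *
        Real.log (prob p (fun ω => X1 ω = x1 ∧ X2 ω = x2 ∧ L ω = l) /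
          (prob p (fun ω => L ω = l) *
            (prob p (fun ω => X1 ω = x1 ∧ L ω = l) / prob p (fun ω => L ω = l)) *
            (prob p (fun ω => X2 ω = x2 ∧ L ω = l) / prob p (fun ω => L ω = l)))) =
      prob p (fun ω => X1 ω = x1 ∧ X2 ω = x2 ∧ L ω = l) *
        Real.log (prob p (fun ω => X1 ω = x1 ∧ X2 ω = x2 ∧ L ω = l) /
          prob p (fun ω => L ω = l)) -
      prob p (fun ω => X1 ω = x1 ∧ X2 ω = x2 ∧ L ω = l) *
        Real.log (prob p (fun ω => X1 ω = x1 ∧ L ω = l) /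
          prob p (fun ω => L ω = l)) -
      prob p (fun ω => X1 ω = x1 ∧ X2 ω = x2 ∧ L ω = l) *
        Real.log (prob p (fun ω => X2 ω = x2 ∧ L ω = l) /
          prob p (fun ω => L ω = l)) := by
    intro x1 x2 l
    rcases (prob_nonneg p hp
        (fun ω => X1 ω = x1 ∧ X2 ω = x2 ∧ L ω = l)).eq_or_lt with h0 | hpos
    · rw [← h0]; ring
    · have h1 : 0 < prob p (fun ω => X1 ω = x1 ∧ L ω = l) :=
        lt_of_lt_of_le hpos (prob_mono p hp fun ω hw => ⟨hw.1, hw.2.2⟩)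
      have h2 : 0 < prob p (fun ω => X2 ω = x2 ∧ L ω = l) :=
        lt_of_lt_of_le hpos (prob_mono p hp fun ω hw => ⟨hw.2.1, hw.2.2⟩)
      have h3 : 0 < prob p (fun ω => L ω = l) :=
        lt_of_lt_of_le hpos (prob_mono p hp fun ω hw => hw.2.2)
      have hd : prob p (fun ω => L ω = l) *
          (prob p (fun ω => X1 ω = x1 ∧ L ω = l) / prob p (fun ω => L ω = l)) *
          (prob p (fun ω => X2 ω = x2 ∧ L ω = l) / prob p (fun ω => L ω = l)) =
          prob p (fun ω => X1 ω = x1 ∧ L ω = l) *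
            prob p (fun ω => X2 ω = x2 ∧ L ω = l) / prob p (fun ω => L ω = l) := by
        field_simp
      rw [hd, Real.log_div hpos.ne' (div_pos (mul_pos h1 h2) h3).ne',
        Real.log_div (mul_pos h1 h2).ne' h3.ne', Real.log_mul h1.ne' h2.ne',
        Real.log_div hpos.ne' h3.ne', Real.log_div h1.ne' h3.ne',
        Real.log_div h2.ne' h3.ne']
      ring
  calc medKL p X1 X2 L
      = ∑ x1, ∑ x2, ∑ l,
          (prob p (fun ω => X1 ω = x1 ∧ X2 ω = x2 ∧ L ω = l) *
            Real.log (prob p (fun ω => X1 ω = x1 ∧ X2 ω = x2 ∧ L ω = l) /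
              prob p (fun ω => L ω = l)) -
          prob p (fun ω => X1 ω = x1 ∧ X2 ω = x2 ∧ L ω = l) *
            Real.log (prob p (fun ω => X1 ω = x1 ∧ L ω = l) /
              prob p (fun ω => L ω = l)) -
          prob p (fun ω => X1 ω = x1 ∧ X2 ω = x2 ∧ L ω = l) *
            Real.log (prob p (fun ω => X2 ω = x2 ∧ L ω = l) /
              prob p (fun ω => L ω = l))) := by
        rw [medKL_rep p X1 X2 L]
        exact Finset.sum_congr rfl fun x1 _ => Finset.sum_congr rfl fun x2 _ =>
          Finset.sum_congr rfl fun l _ => hpt x1 x2 l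
    _ = condEnt p L X1 + condEnt p L X2 - condEnt p L (fun ω => (X1 ω, X2 ω)) := by
        simp only [Finset.sum_sub_distrib]
        rw [condEnt_rep_last1 p X1 X2 L, condEnt_rep_last2 p X1 X2 L,
          condEnt_rep_last_pair p X1 X2 L]
        ring

end Med
section KeyLemma

/-- The technical equivalence reshuffling ((l,x2),l') into ((l,l'),x2). -/
def reshuffleEquiv (γ β δ : Type*) : (γ × β) × δ ≃ (γ × δ) × β where
  toFun q := ((q.1.1, q.2), q.1.2)
  invFun q := ((q.1.1, q.2), q.1.2)
  left_inv q := rfl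
  right_inv q := rfl

lemma natural_latents_key {Ω α β γ δ : Type*}
    [Fintype Ω] [Fintype α] [Fintype β] [Fintype γ] [Fintype δ]
    (p : Ω → ℝ) (hp : ∀ ω, 0 ≤ p ω)
    (X1 : Ω → α) (X2 : Ω → β) (L : Ω → γ) (L' : Ω → δ)
    (εmed εred : ℝ)
    (hmed : medKL p X1 X2 L ≤ εmed)
    (hred1 : condEnt p X1 L' ≤ εred) (hred2 : condEnt p X2 L' ≤ εred) :
    condEnt p L L' ≤ εmed + 2 * εred := by
  -- chain decompositions conditioned on L
  have c1 : condEnt p L (fun ω => (L' ω, X1 ω)) =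
      condEnt p L L' + condEnt p (fun ω => (L ω, L' ω)) X1 :=
    condEnt_chain p hp L L' X1
  have c2 : condEnt p L (fun ω => (X1 ω, L' ω)) =
      condEnt p L (fun ω => (L' ω, X1 ω)) :=
    condEnt_right_congr p (Equiv.prodComm δ α) L
      (fun ω => (L' ω, X1 ω)) (fun ω => (X1 ω, L' ω)) (fun ω => rfl)
  have c3 : condEnt p L (fun ω => (X1 ω, L' ω)) =
      condEnt p L X1 + condEnt p (fun ω => (L ω, X1 ω)) L' :=
    condEnt_chain p hp L X1 L'
  -- bound H(L'|(L,X1)) ≤ H(L'|X1) ≤ εred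
  have c4 : condEnt p (fun ω => (L ω, X1 ω)) L' =
      condEnt p (fun ω => (X1 ω, L ω)) L' :=
    condEnt_cond_congr p (Equiv.prodComm α γ)
      (fun ω => (X1 ω, L ω)) (fun ω => (L ω, X1 ω)) (fun ω => rfl) L'
  have c5 : condEnt p (fun ω => (X1 ω, L ω)) L' ≤ condEnt p X1 L' :=
    condEnt_pair_le p hp X1 L L'
  -- H(X1|(L,L')) ≥ H(X1|((L,L'),X2)) = H(X1|((L,X2),L'))
  have c6 : condEnt p (fun ω => ((L ω, L' ω), X2 ω)) X1 ≤
      condEnt p (fun ω => (L ω, L' ω)) X1 :=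
    condEnt_pair_le p hp (fun ω => (L ω, L' ω)) X2 X1
  have c7 : condEnt p (fun ω => ((L ω, L' ω), X2 ω)) X1 =
      condEnt p (fun ω => ((L ω, X2 ω), L' ω)) X1 :=
    condEnt_cond_congr p (reshuffleEquiv γ β δ)
      (fun ω => ((L ω, X2 ω), L' ω)) (fun ω => ((L ω, L' ω), X2 ω))
      (fun ω => rfl) X1
  -- chain decompositions conditioned on (L,X2)
  have c8 : condEnt p (fun ω => (L ω, X2 ω)) (fun ω => (L' ω, X1 ω)) =
      condEnt p (fun ω => (L ω, X2 ω)) L' +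
        condEnt p (fun ω => ((L ω, X2 ω), L' ω)) X1 :=
    condEnt_chain p hp (fun ω => (L ω, X2 ω)) L' X1
  have c9 : condEnt p (fun ω => (L ω, X2 ω)) (fun ω => (X1 ω, L' ω)) =
      condEnt p (fun ω => (L ω, X2 ω)) (fun ω => (L' ω, X1 ω)) :=
    condEnt_right_congr p (Equiv.prodComm δ α) (fun ω => (L ω, X2 ω))
      (fun ω => (L' ω, X1 ω)) (fun ω => (X1 ω, L' ω)) (fun ω => rfl)
  have c10 : condEnt p (fun ω => (L ω, X2 ω)) (fun ω => (X1 ω, L' ω)) =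
      condEnt p (fun ω => (L ω, X2 ω)) X1 +
        condEnt p (fun ω => ((L ω, X2 ω), X1 ω)) L' :=
    condEnt_chain p hp (fun ω => (L ω, X2 ω)) X1 L'
  have c11 : 0 ≤ condEnt p (fun ω => ((L ω, X2 ω), X1 ω)) L' :=
    condEnt_nonneg p hp _ _
  -- bound H(L'|(L,X2)) ≤ H(L'|X2) ≤ εred
  have c12 : condEnt p (fun ω => (L ω, X2 ω)) L' =
      condEnt p (fun ω => (X2 ω, L ω)) L' :=
    condEnt_cond_congr p (Equiv.prodComm β γ)
      (fun ω => (X2 ω, L ω)) (fun ω => (L ω, X2 ω)) (fun ω => rfl) L'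
  have c13 : condEnt p (fun ω => (X2 ω, L ω)) L' ≤ condEnt p X2 L' :=
    condEnt_pair_le p hp X2 L L'
  -- medKL as conditional mutual information
  have c14 : medKL p X1 X2 L =
      condEnt p L X1 + condEnt p L X2 - condEnt p L (fun ω => (X1 ω, X2 ω)) :=
    medKL_eq p hp X1 X2 L
  have c15 : condEnt p L (fun ω => (X1 ω, X2 ω)) =
      condEnt p L (fun ω => (X2 ω, X1 ω)) :=
    condEnt_right_congr p (Equiv.prodComm β α) L
      (fun ω => (X2 ω, X1 ω)) (fun ω => (X1 ω, X2 ω)) (fun ω => rfl)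
  have c16 : condEnt p L (fun ω => (X2 ω, X1 ω)) =
      condEnt p L X2 + condEnt p (fun ω => (L ω, X2 ω)) X1 :=
    condEnt_chain p hp L X2 X1
  linarith

end KeyLemma

/-- Approximate isomorphism of natural latents: if Λ and Λ' each satisfy
mediation over (X₁,X₂) to within ε_med and redundancy to within ε_red, then
H(Λ'|Λ) ≤ ε_med + 2ε_red and H(Λ|Λ') ≤ ε_med + 2ε_red. -/
theorem natural_latents_approx_isomorphic
    {Ω α β γ δ : Type*} [Fintype Ω] [Fintype α] [Fintype β] [Fintype γ] [Fintype δ]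
    (p : Ω → ℝ) (hp : ∀ ω, 0 ≤ p ω) (hsum : ∑ ω, p ω = 1)
    (X1 : Ω → α) (X2 : Ω → β) (L : Ω → γ) (L' : Ω → δ)
    (εmed εred : ℝ)
    (hmedL : medKL p X1 X2 L ≤ εmed) (hmedL' : medKL p X1 X2 L' ≤ εmed)
    (hredL1 : condEnt p X1 L ≤ εred) (hredL2 : condEnt p X2 L ≤ εred)
    (hredL'1 : condEnt p X1 L' ≤ εred) (hredL'2 : condEnt p X2 L' ≤ εred) :
    condEnt p L L' ≤ εmed + 2 * εred ∧ condEnt p L' L ≤ εmed + 2 * εred :=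
  ⟨natural_latents_key p hp X1 X2 L L' εmed εred hmedL hredL'1 hredL'2,
   natural_latents_key p hp X1 X2 L' L εmed εred hmedL' hredL1 hredL2⟩
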